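/- For any n ≥ 1 and d ≥ 2, f(n,d) ≤ n + log₂(n) · f(n,d−1), where f(n,d) is the supremum of τ(𝓑) over finite families of axis-parallel boxes in ℝ^d with ν(𝓑) ≤ n. -/

import Mathlib

/-- A finite point set `S` pierces the family `F` if every member contains a point of `S`. -/
def Piercing {α : Type*} (S : Finset α) (F : Finset (Set α)) : Prop :=
  ∀ B ∈ F, ∃ p ∈ S, p ∈ B

/-- The piercing (transversal) number τ of a finite family of sets. -/
noncomputable def tau {α : Type*} (F : Finset (Set α)) : ℕ :=
  sInf {n | ∃ S : Finset α, S.card = n ∧ Piercing S F}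

/-- The independence number ν : the maximal number of pairwise disjoint members. -/
noncomputable def nu {α : Type*} (F : Finset (Set α)) : ℕ :=
  sSup {n | ∃ G ⊆ F, G.card = n ∧ (G : Set (Set α)).PairwiseDisjoint id}

/-- An axis-parallel box in ℝ^d : a product of d nonempty closed intervals. -/
def IsBox (d : ℕ) (B : Set (Fin d → ℝ)) : Prop :=
  ∃ l u : Fin d → ℝ, l ≤ u ∧ B = Set.Icc l u

/-- `f n d` : the supremum of τ over finite families of boxes in ℝ^d with ν ≤ n. -/
noncomputable def fBox (n d : ℕ) : ℕ :=
  sSup {t | ∃ F : Finset (Set (Fin d → ℝ)),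
    (∀ B ∈ F, IsBox d B) ∧ nu F ≤ n ∧ tau F = t}

/-!
Cut ℝ^(d+1) by a hyperplane `x₀ = c`, with `c` the least value such that the boxes lying weakly
below it contain `k + 1` pairwise disjoint ones. The boxes strictly below have `ν ≤ k`, those
strictly above are disjoint from `k + 1` disjoint boxes and so have `ν ≤ n - k - 1`, and the boxes
met by the hyperplane are pierced through their sections, boxes in ℝ^d with `ν ≤ n`. Hence
`f(n, d+1) ≤ f(k, d+1) + f(n-k-1, d+1) + f(n, d)`. By induction on `d` this recursion already
shows that `f` is finite and that `f(1, d) ≤ 1`. Two extremal families moved far apart show that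
`f(·, d+1)` is superadditive, and then induction on `n` with `k = ⌊n/2⌋` gives the bound, since
`log₂ ⌊n/2⌋ + 1 ≤ log₂ n`.
-/

open Finset

open scoped Classical

section Transversal

variable {α β : Type*} {F G : Finset (Set α)} {S : Finset α} {m : ℕ}

theorem tau_le_card (hS : Piercing S F) : tau F ≤ S.card :=
  Nat.sInf_le ⟨S, rfl, hS⟩

theorem exists_piercing_card_eq_tau (hF : ∀ B ∈ F, B.Nonempty) :
    ∃ S : Finset α, Piercing S F ∧ S.card = tau F := by
  have hpierce : Piercing (F.attach.image fun B => (hF B.1 B.2).some) F := fun B hB =>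
    ⟨_, mem_image_of_mem _ (F.mem_attach ⟨B, hB⟩), (hF B hB).some_mem⟩
  obtain ⟨S, hcard, hS⟩ :=
    Nat.sInf_mem (s := {n | ∃ S : Finset α, S.card = n ∧ Piercing S F}) ⟨_, _, rfl, hpierce⟩
  exact ⟨S, hS, hcard⟩

theorem tau_empty : tau (∅ : Finset (Set α)) = 0 :=
  Nat.eq_zero_of_le_zero (tau_le_card (S := ∅) fun _ h => absurd h (notMem_empty _))

theorem tau_eq_zero_of_empty_mem (h : ∅ ∈ F) : tau F = 0 :=
  Nat.sInf_eq_zero.2 <| Or.inr <| Set.eq_empty_of_forall_notMem fun _ ⟨_, _, hS⟩ =>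
    let ⟨_, _, hp⟩ := hS ∅ h; hp

theorem tau_union_le : tau (F ∪ G) ≤ tau F + tau G := by
  by_cases hne : ∀ B ∈ F ∪ G, B.Nonempty
  · obtain ⟨S, hS, hSF⟩ := exists_piercing_card_eq_tau fun B hB => hne B (mem_union_left _ hB)
    obtain ⟨T, hT, hTG⟩ := exists_piercing_card_eq_tau fun B hB => hne B (mem_union_right _ hB)
    calc tau (F ∪ G) ≤ (S ∪ T).card := tau_le_card fun B hB => (mem_union.1 hB).elim
            (fun hB => let ⟨p, hp, hpB⟩ := hS B hB; ⟨p, mem_union_left _ hp, hpB⟩)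
            (fun hB => let ⟨p, hp, hpB⟩ := hT B hB; ⟨p, mem_union_right _ hp, hpB⟩)
      _ ≤ S.card + T.card := card_union_le S T
      _ = tau F + tau G := by rw [hSF, hTG]
  · push Not at hne
    obtain ⟨B, hB, hBe⟩ := hne
    rw [tau_eq_zero_of_empty_mem (hBe ▸ hB)]
    exact Nat.zero_le _

theorem add_tau_le_tau_union (hne : ∀ B ∈ F ∪ G, B.Nonempty)
    (hsep : ∀ A ∈ F, ∀ B ∈ G, Disjoint A B) : tau F + tau G ≤ tau (F ∪ G) := by
  obtain ⟨S, hS, hcard⟩ := exists_piercing_card_eq_tau hne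
  have hSF : Piercing (S.filter fun p => ∃ A ∈ F, p ∈ A) F := fun A hA =>
    let ⟨p, hp, hpA⟩ := hS A (mem_union_left _ hA)
    ⟨p, mem_filter.2 ⟨hp, A, hA, hpA⟩, hpA⟩
  have hSG : Piercing (S.filter fun p => ¬∃ A ∈ F, p ∈ A) G := fun B hB =>
    let ⟨p, hp, hpB⟩ := hS B (mem_union_right _ hB)
    ⟨p, mem_filter.2 ⟨hp, fun ⟨A, hA, hpA⟩ => Set.disjoint_left.1 (hsep A hA B hB) hpA hpB⟩, hpB⟩
  calc tau F + tau G ≤ _ + _ := add_le_add (tau_le_card hSF) (tau_le_card hSG)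
    _ = tau (F ∪ G) := by rw [card_filter_add_card_filter_not, hcard]

theorem tau_le_tau_image_preimage {f : β → α} (hF : ∀ B ∈ F, (f ⁻¹' B).Nonempty) :
    tau F ≤ tau (F.image (f ⁻¹' ·)) := by
  obtain ⟨S, hS, hcard⟩ := exists_piercing_card_eq_tau (F := F.image (f ⁻¹' ·)) <| by
    simpa only [Finset.forall_mem_image] using hF
  calc tau F ≤ (S.image f).card := tau_le_card fun B hB =>
        let ⟨p, hp, hpB⟩ := hS _ (mem_image_of_mem _ hB)
        ⟨f p, mem_image_of_mem f hp, hpB⟩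
    _ ≤ S.card := card_image_le
    _ = _ := hcard

theorem tau_le_one [Unique α] (hF : ∀ B ∈ F, B.Nonempty) : tau F ≤ 1 :=
  tau_le_card (S := {default}) fun B hB =>
    let ⟨x, hx⟩ := hF B hB; ⟨default, mem_singleton_self _, Unique.eq_default x ▸ hx⟩

theorem bddAbove_nuSet (F : Finset (Set α)) :
    BddAbove {n | ∃ G ⊆ F, G.card = n ∧ (G : Set (Set α)).PairwiseDisjoint id} := by
  refine ⟨F.card, ?_⟩
  rintro _ ⟨G, hG, rfl, -⟩
  exact card_le_card hG

theorem card_le_nu (hG : G ⊆ F) (hd : (G : Set (Set α)).PairwiseDisjoint id) :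
    G.card ≤ nu F :=
  le_csSup (bddAbove_nuSet F) ⟨G, hG, rfl, hd⟩

theorem nu_le (h : ∀ G ⊆ F, (G : Set (Set α)).PairwiseDisjoint id → G.card ≤ m) :
    nu F ≤ m :=
  csSup_le ⟨0, ∅, empty_subset _, rfl, by simp⟩ <| by
    rintro _ ⟨G, hG, rfl, hd⟩
    exact h G hG hd

theorem exists_pairwiseDisjoint_card_eq_nu (F : Finset (Set α)) :
    ∃ G ⊆ F, (G : Set (Set α)).PairwiseDisjoint id ∧ G.card = nu F := by
  obtain ⟨G, hG, hcard, hd⟩ := Nat.sSup_mem (s := {n | ∃ G ⊆ F, G.card = n ∧ _})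
    ⟨0, ∅, empty_subset _, rfl, by simp⟩ (bddAbove_nuSet F)
  exact ⟨G, hG, hd, hcard⟩

theorem nu_mono (h : G ⊆ F) : nu G ≤ nu F :=
  nu_le fun _ hG' hd => card_le_nu (hG'.trans h) hd

theorem nu_empty : nu (∅ : Finset (Set α)) = 0 :=
  Nat.eq_zero_of_le_zero <| nu_le fun G hG _ => by simp [subset_empty.1 hG]

theorem nu_eq_zero : nu F = 0 ↔ F = ∅ := by
  refine ⟨fun h => not_nonempty_iff_eq_empty.1 fun ⟨B, hB⟩ => ?_, fun h => h ▸ nu_empty⟩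
  simpa [h] using card_le_nu (singleton_subset_iff.2 hB) (by simp)

theorem nu_union_le : nu (F ∪ G) ≤ nu F + nu G := nu_le fun H hH hd => by
  calc H.card = ((H ∩ F) ∪ (H ∩ G)).card := by
        rw [← inter_union_distrib_left, Finset.inter_eq_left.2 hH]
    _ ≤ (H ∩ F).card + (H ∩ G).card := card_union_le _ _
    _ ≤ nu F + nu G := add_le_add
        (card_le_nu inter_subset_right (hd.subset (coe_subset.2 (inter_subset_left (s₂ := F)))))
        (card_le_nu inter_subset_right (hd.subset (coe_subset.2 (inter_subset_left (s₂ := G)))))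

theorem nu_add_le_nu_union (hne : ∀ A ∈ F, A.Nonempty)
    (hsep : ∀ A ∈ F, ∀ B ∈ G, Disjoint A B) : nu F + nu G ≤ nu (F ∪ G) := by
  obtain ⟨F', hF', hdF, hcardF⟩ := exists_pairwiseDisjoint_card_eq_nu F
  obtain ⟨G', hG', hdG, hcardG⟩ := exists_pairwiseDisjoint_card_eq_nu G
  have hdisj : Disjoint F' G' := Finset.disjoint_left.2 fun A hAF hAG =>
    (hne A (hF' hAF)).ne_empty (disjoint_self.1 (hsep A (hF' hAF) A (hG' hAG)))
  calc nu F + nu G = (F' ∪ G').card := by rw [card_union_of_disjoint hdisj, hcardF, hcardG]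
    _ ≤ nu (F ∪ G) := card_le_nu (union_subset_union hF' hG') <| by
        rw [coe_union, Set.pairwiseDisjoint_union]
        exact ⟨hdF, hdG, fun A hA B hB _ => hsep A (hF' hA) B (hG' hB)⟩

theorem nu_image_le {f : Set α → Set β}
    (hf : ∀ A ∈ F, ∀ B ∈ F, Disjoint (f A) (f B) → Disjoint A B) : nu (F.image f) ≤ nu F := by
  refine nu_le fun H hH hd => ?_
  have hpre : ∀ A ∈ H, ∃ B ∈ F, f B = A := fun A hA => mem_image.1 (hH hA)
  choose! g hgF hfg using hpre
  have hinj : Set.InjOn g H := fun A₁ h₁ A₂ h₂ h => by rw [← hfg A₁ h₁, ← hfg A₂ h₂, h]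
  rw [← card_image_of_injOn hinj]
  refine card_le_nu (image_subset_iff.2 hgF) ?_
  rw [coe_image]
  rintro _ ⟨A₁, h₁, rfl⟩ _ ⟨A₂, h₂, rfl⟩ hne
  refine hf _ (hgF A₁ h₁) _ (hgF A₂ h₂) ?_
  simp only [id, hfg A₁ h₁, hfg A₂ h₂]
  exact hd h₁ h₂ fun h => hne (h ▸ rfl)

theorem exists_nu_filter_lt_le_and_lt_nu_filter_le {γ : Type*} [LinearOrder γ] (hi : Set α → γ)
    (hk : m < nu F) : ∃ c, nu (F.filter (hi · < c)) ≤ m ∧ m < nu (F.filter (hi · ≤ c)) := by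
  have hF : F.Nonempty := nonempty_iff_ne_empty.2 fun h => by rw [h, nu_empty] at hk; omega
  set T := (F.image hi).filter fun t => m < nu (F.filter (hi · ≤ t))
  have hT : T.Nonempty := by
    obtain ⟨B, hB, hmax⟩ := F.exists_max_image hi hF
    refine ⟨hi B, mem_filter.2 ⟨mem_image_of_mem hi hB, ?_⟩⟩
    rwa [filter_true_of_mem hmax]
  refine ⟨T.min' hT, not_lt.1 fun hlt => ?_, (mem_filter.1 (T.min'_mem hT)).2⟩
  have hne : (F.filter (hi · < T.min' hT)).Nonempty :=
    nonempty_iff_ne_empty.2 fun h => by rw [h, nu_empty] at hlt; omega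
  obtain ⟨B, hB, hmax⟩ := (F.filter (hi · < T.min' hT)).exists_max_image hi hne
  have hBT : hi B ∈ T := mem_filter.2 ⟨mem_image_of_mem hi (mem_filter.1 hB).1,
    hlt.trans_le (nu_mono fun A hA => mem_filter.2 ⟨(mem_filter.1 hA).1, hmax A hA⟩)⟩
  exact (T.min'_le _ hBT).not_gt (mem_filter.1 hB).2

end Transversal

section Boxes

open Set (Icc)

variable {d : ℕ} {B : Set (Fin d → ℝ)} {l u : Fin d → ℝ}

theorem IsBox.nonempty (hB : IsBox d B) : B.Nonempty :=
  let ⟨_, _, hlu, hB⟩ := hB; hB ▸ Set.nonempty_Icc.2 hlu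

noncomputable def coordSup (i : Fin d) (B : Set (Fin d → ℝ)) : ℝ := sSup ((· i) '' B)

theorem coordSup_Icc (hlu : l ≤ u) (i : Fin d) : coordSup i (Icc l u) = u i := by
  rw [coordSup, ← Set.pi_univ_Icc, Set.eval_image_univ_pi (by simpa using hlu),
    csSup_Icc (hlu i)]

theorem IsBox.le_coordSup (hB : IsBox d B) {x : Fin d → ℝ} (hx : x ∈ B) (i : Fin d) :
    x i ≤ coordSup i B := by
  obtain ⟨l, u, hlu, rfl⟩ := hB
  rw [coordSup_Icc hlu]
  exact hx.2 i

def coordSlice (i : Fin (d + 1)) (c : ℝ) (B : Set (Fin (d + 1) → ℝ)) : Set (Fin d → ℝ) :=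
  Fin.insertNth (α := fun _ => ℝ) i c ⁻¹' B

variable {B : Set (Fin (d + 1) → ℝ)} {i : Fin (d + 1)} {c : ℝ}

theorem IsBox.isBox_coordSlice (hB : IsBox (d + 1) B) (hne : (coordSlice i c B).Nonempty) :
    IsBox d (coordSlice i c B) := by
  obtain ⟨l, u, hlu, rfl⟩ := hB
  by_cases hc : c ∈ Icc (l i) (u i)
  · exact ⟨_, _, fun j => hlu _, Fin.preimage_insertNth_Icc_of_mem hc⟩
  · rw [coordSlice, Fin.preimage_insertNth_Icc_of_notMem hc] at hne
    exact absurd hne Set.not_nonempty_empty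

theorem IsBox.removeNth_mem_coordSlice (hB : IsBox (d + 1) B) (hne : (coordSlice i c B).Nonempty)
    {x : Fin (d + 1) → ℝ} (hx : x ∈ B) : i.removeNth x ∈ coordSlice i c B := by
  obtain ⟨l, u, hlu, rfl⟩ := hB
  obtain ⟨y, hy⟩ := hne
  exact Fin.insertNth_mem_Icc.2
    ⟨(Fin.insertNth_mem_Icc.1 (show _ ∈ Icc l u from hy)).1, fun _ => hx.1 _, fun _ => hx.2 _⟩

theorem IsBox.coordSlice_nonempty_or_lt (hB : IsBox (d + 1) B) (hc : c ≤ coordSup i B) :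
    (coordSlice i c B).Nonempty ∨ ∀ x ∈ B, c < x i := by
  obtain ⟨l, u, hlu, rfl⟩ := hB
  rw [coordSup_Icc hlu] at hc
  by_cases hl : l i ≤ c
  · rw [coordSlice, Fin.preimage_insertNth_Icc_of_mem ⟨hl, hc⟩]
    exact Or.inl (Set.nonempty_Icc.2 fun j => hlu _)
  · exact Or.inr fun x hx => (not_le.1 hl).trans_le (hx.1 i)

variable (i c) {F : Finset (Set (Fin (d + 1) → ℝ))}

theorem isBox_of_mem_image_coordSlice
    (hF : ∀ B ∈ F, IsBox (d + 1) B ∧ (coordSlice i c B).Nonempty) :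
    ∀ A ∈ F.image (coordSlice i c), IsBox d A := by
  simpa only [Finset.forall_mem_image] using fun B hB => (hF B hB).1.isBox_coordSlice (hF B hB).2

theorem nu_image_coordSlice_le (hF : ∀ B ∈ F, IsBox (d + 1) B ∧ (coordSlice i c B).Nonempty) :
    nu (F.image (coordSlice i c)) ≤ nu F :=
  nu_image_le fun A hA B hB h => Set.disjoint_left.2 fun _ hxA hxB =>
    Set.disjoint_left.1 h ((hF A hA).1.removeNth_mem_coordSlice (hF A hA).2 hxA)
      ((hF B hB).1.removeNth_mem_coordSlice (hF B hB).2 hxB)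

end Boxes

theorem exists_split_of_isBox {d : ℕ} {F : Finset (Set (Fin (d + 1) → ℝ))}
    (hF : ∀ B ∈ F, IsBox (d + 1) B) (k : ℕ) :
    ∃ F₁ ⊆ F, ∃ F₂ ⊆ F, ∃ E : Finset (Set (Fin d → ℝ)), (∀ A ∈ E, IsBox d A) ∧
      nu F₁ ≤ k ∧ nu F₂ ≤ nu F - (k + 1) ∧ nu E ≤ nu F ∧ tau F ≤ tau F₁ + tau F₂ + tau E := by
  rcases le_or_gt (nu F) k with hk | hk
  · exact ⟨F, subset_rfl, ∅, empty_subset _, ∅, by simp, hk, by simp [nu_empty],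
      by simp [nu_empty], by simp [tau_empty]⟩
  obtain ⟨c, hlow, hhigh⟩ := exists_nu_filter_lt_le_and_lt_nu_filter_le (coordSup 0) hk
  set F₁ := F.filter (coordSup 0 · < c)
  set F₂ := F.filter fun B => ∀ x ∈ B, c < x 0
  set Fc := F.filter fun B => (coordSlice 0 c B).Nonempty
  have hFc : ∀ B ∈ Fc, IsBox (d + 1) B ∧ (coordSlice 0 c B).Nonempty := fun B hB =>
    ⟨hF B (mem_filter.1 hB).1, (mem_filter.1 hB).2⟩
  have hcover : F = F₁ ∪ F₂ ∪ Fc := by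
    refine Subset.antisymm (fun B hB => ?_)
      (union_subset (union_subset (filter_subset _ _) (filter_subset _ _)) (filter_subset _ _))
    simp only [F₁, F₂, Fc, mem_union, mem_filter, hB, true_and]
    rcases lt_or_ge (coordSup 0 B) c with h | h
    · exact Or.inl (Or.inl h)
    · exact ((hF B hB).coordSlice_nonempty_or_lt h).elim Or.inr (Or.inl ∘ Or.inr)
  have hsep : nu (F.filter (coordSup 0 · ≤ c)) + nu F₂ ≤ nu F := by
    refine (nu_add_le_nu_union (fun B hB => (hF B (mem_filter.1 hB).1).nonempty)
      fun A hA B hB => Set.disjoint_left.2 fun x hxA hxB => ?_).trans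
      (nu_mono (union_subset (filter_subset _ _) (filter_subset _ _)))
    exact (((hF A (mem_filter.1 hA).1).le_coordSup hxA 0).trans (mem_filter.1 hA).2).not_gt
      ((mem_filter.1 hB).2 x hxB)
  refine ⟨F₁, filter_subset _ _, F₂, filter_subset _ _, Fc.image (coordSlice 0 c),
    isBox_of_mem_image_coordSlice 0 c hFc, hlow, by omega,
    (nu_image_coordSlice_le 0 c hFc).trans (nu_mono (filter_subset _ _)), ?_⟩
  calc tau F = tau (F₁ ∪ F₂ ∪ Fc) := by rw [← hcover]
    _ ≤ tau F₁ + tau F₂ + tau Fc := tau_union_le.trans (Nat.add_le_add_right tau_union_le _)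
    _ ≤ tau F₁ + tau F₂ + tau (Fc.image (coordSlice 0 c)) :=
        Nat.add_le_add_left (tau_le_tau_image_preimage fun B hB => (hFc B hB).2) _

theorem exists_tau_le (d n : ℕ) :
    ∃ C, ∀ F : Finset (Set (Fin d → ℝ)), (∀ B ∈ F, IsBox d B) → nu F ≤ n → tau F ≤ C := by
  induction d generalizing n with
  | zero => exact ⟨1, fun F hF _ => tau_le_one fun B hB => (hF B hB).nonempty⟩
  | succ d ihd =>
    induction n with
    | zero => exact ⟨0, fun F _ hν => by rw [nu_eq_zero.1 (Nat.le_zero.1 hν), tau_empty]⟩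
    | succ n ihn =>
      obtain ⟨C, hC⟩ := ihn
      obtain ⟨C', hC'⟩ := ihd (n + 1)
      refine ⟨C + C + C', fun F hF hν => ?_⟩
      obtain ⟨F₁, hF₁, F₂, hF₂, E, hE, hν₁, hν₂, hνE, hτ⟩ := exists_split_of_isBox hF n
      have := hC F₁ (fun B hB => hF B (hF₁ hB)) hν₁
      have := hC F₂ (fun B hB => hF B (hF₂ hB)) (by omega)
      have := hC' E hE (hνE.trans hν)
      omega

theorem bddAbove_fBoxSet (n d : ℕ) :
    BddAbove {t | ∃ F : Finset (Set (Fin d → ℝ)), (∀ B ∈ F, IsBox d B) ∧ nu F ≤ n ∧ tau F = t} :=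
  let ⟨C, hC⟩ := exists_tau_le d n
  ⟨C, by rintro _ ⟨F, hF, hν, rfl⟩; exact hC F hF hν⟩

theorem tau_le_fBox {n d : ℕ} {F : Finset (Set (Fin d → ℝ))} (hF : ∀ B ∈ F, IsBox d B)
    (hν : nu F ≤ n) : tau F ≤ fBox n d :=
  le_csSup (bddAbove_fBoxSet n d) ⟨F, hF, hν, rfl⟩

theorem exists_tau_eq_fBox (n d : ℕ) :
    ∃ F : Finset (Set (Fin d → ℝ)), (∀ B ∈ F, IsBox d B) ∧ nu F ≤ n ∧ tau F = fBox n d := by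
  refine Nat.sSup_mem ?_ (bddAbove_fBoxSet n d)
  exact ⟨0, ∅, by simp, by simp [nu_empty], tau_empty⟩

theorem fBox_zero_left (d : ℕ) : fBox 0 d = 0 := by
  obtain ⟨F, -, hν, hτ⟩ := exists_tau_eq_fBox 0 d
  rw [← hτ, nu_eq_zero.1 (Nat.le_zero.1 hν), tau_empty]

theorem fBox_le_add_add (n k d : ℕ) :
    fBox n (d + 1) ≤ fBox k (d + 1) + fBox (n - k - 1) (d + 1) + fBox n d := by
  obtain ⟨F, hF, hν, hτ⟩ := exists_tau_eq_fBox n (d + 1)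
  obtain ⟨F₁, hF₁, F₂, hF₂, E, hE, hν₁, hν₂, hνE, hτF⟩ := exists_split_of_isBox hF k
  have := tau_le_fBox (fun B hB => hF B (hF₁ hB)) hν₁
  have := tau_le_fBox (n := n - k - 1) (fun B hB => hF B (hF₂ hB)) (by omega)
  have := tau_le_fBox hE (hνE.trans hν)
  omega

theorem fBox_one_le (d : ℕ) : fBox 1 d ≤ 1 := by
  induction d with
  | zero =>
    obtain ⟨F, hF, -, hτ⟩ := exists_tau_eq_fBox 1 0
    exact hτ ▸ tau_le_one fun B hB => (hF B hB).nonempty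
  | succ d ih =>
    have := fBox_le_add_add 1 0 d
    rw [Nat.sub_self, fBox_zero_left] at this
    omega

theorem fBox_add_le (a b d : ℕ) : fBox a (d + 1) + fBox b (d + 1) ≤ fBox (a + b) (d + 1) := by
  obtain ⟨F, hF, hνF, hτF⟩ := exists_tau_eq_fBox a (d + 1)
  obtain ⟨G, hG, hνG, hτG⟩ := exists_tau_eq_fBox b (d + 1)
  obtain ⟨M, hM⟩ : BddAbove (⋃ B ∈ (F : Set (Set (Fin (d + 1) → ℝ))), B) :=
    F.finite_toSet.bddAbove_biUnion.2 fun B hB =>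
      let ⟨_, _, _, hB⟩ := hF B hB; hB ▸ bddAbove_Icc
  obtain ⟨m, hm⟩ : BddBelow (⋃ B ∈ (G : Set (Set (Fin (d + 1) → ℝ))), B) :=
    G.finite_toSet.bddBelow_biUnion.2 fun B hB =>
      let ⟨_, _, _, hB⟩ := hG B hB; hB ▸ bddBelow_Icc
  set shift : (Fin (d + 1) → ℝ) → Fin (d + 1) → ℝ := (· - (M - m + 1))
  have hshift : Function.Surjective shift := fun y => ⟨y + (M - m + 1), add_sub_cancel_right _ _⟩
  set G' := G.image (shift ⁻¹' ·)
  have hFG' : ∀ B ∈ F ∪ G', IsBox (d + 1) B := by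
    simp only [G', Finset.forall_mem_union, Finset.forall_mem_image]
    refine ⟨hF, fun B hB => ?_⟩
    obtain ⟨l, u, hlu, rfl⟩ := hG B hB
    exact ⟨l + (M - m + 1), u + (M - m + 1), by gcongr, Set.preimage_sub_const_Icc _ _ _⟩
  have hsep : ∀ A ∈ F, ∀ B ∈ G', Disjoint A B := by
    simp only [G', Finset.forall_mem_image]
    refine fun A hA B hB => Set.disjoint_left.2 fun x hxA hxB => ?_
    have hxM := hM (Set.mem_biUnion hA hxA) 0
    have hmx := hm (Set.mem_biUnion hB hxB) 0
    simp only [shift, Pi.sub_apply, Pi.add_apply, Pi.one_apply] at hxM hmx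
    linarith
  have hνG' : nu G' ≤ nu G :=
    nu_image_le fun _ _ _ _ h => (Set.disjoint_preimage_iff hshift).1 h
  have hτG' : tau G ≤ tau G' :=
    tau_le_tau_image_preimage fun B hB => (hG B hB).nonempty.preimage hshift
  calc fBox a (d + 1) + fBox b (d + 1) ≤ tau F + tau G' := by omega
    _ ≤ tau (F ∪ G') := add_tau_le_tau_union (fun B hB => (hFG' B hB).nonempty) hsep
    _ ≤ fBox (a + b) (d + 1) := tau_le_fBox hFG' (nu_union_le.trans (by omega))


theorem le_add_logb_mul_of_le_add_add {f g : ℕ → ℕ} (h₀ : f 0 = 0) (h₁ : f 1 ≤ 1)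
    (hrec : ∀ n k, f n ≤ f k + f (n - k - 1) + g n) (hg : ∀ a b, g a + g b ≤ g (a + b))
    (n : ℕ) : (f n : ℝ) ≤ n + Real.logb 2 n * g n := by
  induction n using Nat.strong_induction_on with
  | _ n ih =>
  rcases lt_or_ge n 2 with hn | hn
  · interval_cases n <;> simp [h₀, h₁]
  set k := n / 2
  set m := n - k - 1
  have hk : (1 : ℝ) ≤ k := by exact_mod_cast (show 1 ≤ k by omega)
  have hlogk : 0 ≤ Real.logb 2 k := Real.logb_nonneg one_lt_two hk
  have hlogm : Real.logb 2 m ≤ Real.logb 2 k := by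
    rcases Nat.eq_zero_or_pos m with hm | hm
    · simpa [hm] using hlogk
    · exact Real.logb_le_logb_of_le one_lt_two (by exact_mod_cast hm) (by exact_mod_cast (by omega))
  have hlogn : Real.logb 2 k + 1 ≤ Real.logb 2 n := by
    rw [← Real.logb_self_eq_one one_lt_two, ← Real.logb_mul (by positivity) two_ne_zero]
    exact Real.logb_le_logb_of_le one_lt_two (by positivity) (by exact_mod_cast (by omega))
  have hgkm : (g k : ℝ) + g m ≤ g n := by
    have := hg (k + m) (n - (k + m))
    rw [Nat.add_sub_cancel' (by omega)] at this
    exact_mod_cast (hg k m).trans (by omega)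
  have hkm : (k : ℝ) + m + 1 = n := by norm_cast; omega
  calc (f n : ℝ) ≤ f k + f m + g n := by exact_mod_cast hrec n k
    _ ≤ (k + Real.logb 2 k * g k) + (m + Real.logb 2 m * g m) + g n := by
        gcongr <;> exact ih _ (by omega)
    _ ≤ (k + m) + Real.logb 2 k * (g k + g m) + g n := by
        linarith [mul_le_mul_of_nonneg_right hlogm (Nat.cast_nonneg (g m))]
    _ ≤ (k + m) + Real.logb 2 k * g n + g n := by gcongr
    _ = (n - 1) + (Real.logb 2 k + 1) * g n := by rw [← hkm]; ring
    _ ≤ n + Real.logb 2 n * g n := by gcongr; linarith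

theorem fBox_le_add_log_mul_general (n d : ℕ) (hd : 2 ≤ d) :
    (fBox n d : ℝ) ≤ n + Real.logb 2 n * fBox n (d - 1) := by
  obtain ⟨d, rfl⟩ : ∃ e, d = e + 2 := ⟨d - 2, by omega⟩
  exact le_add_logb_mul_of_le_add_add (f := (fBox · (d + 2))) (g := (fBox · (d + 1)))
    (fBox_zero_left _) (fBox_one_le _) (fun n k => fBox_le_add_add n k (d + 1))
    (fun a b => fBox_add_le a b d) n

/-- Lemma 1: for n ≥ 1, d ≥ 2, f(n,d) ≤ n + log₂ n · f(n,d-1). -/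
theorem fBox_le_add_log_mul (n d : ℕ) (hn : 1 ≤ n) (hd : 2 ≤ d) :
    (fBox n d : ℝ) ≤ n + Real.logb 2 n * fBox n (d - 1) :=
  fBox_le_add_log_mul_general n d hd
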